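/- Let v : ℝ → {0,1} be a characteristic function with a single jump at x̄ and no other jump in I = (x̄ − 2^{−h}, x̄ + 2^{−h}), and let I⁻ = (x̄ − 2^{−h}, x̄) and I⁺ = (x̄, x̄ + 2^{−h}). Let Γ_h be the one-dimensional truncated kernel Γ_h(x) = 2^{2(h+1)} − 2^{2h} for 0 < |x| ≤ 2^{−h−1}, = |x|^{−2} − 2^{2h} for 2^{−h−1} < |x| ≤ 2^{−h}, and = 0 for |x| > 2^{−h}. Then p_{Γ_h, I}(v) = ∫_{I×I} Γ_h(x−y)(v(x)−v(y))² dx dy = 2 ∫_{I⁻×I⁺} Γ_h(x−y) dx dy = 2 ∫_{−1}^{0}∫_0^1 Γ_0(x−y) dx dy = 2 ln 2. -/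

import Mathlib

open MeasureTheory intervalIntegral

noncomputable section

def Gam1 (h : ℕ) (x : ℝ) : ℝ :=
  if |x| ≤ ((2 : ℝ) ^ (h + 1))⁻¹ then (2 : ℝ) ^ (2 * (h + 1)) - (2 : ℝ) ^ (2 * h)
  else if |x| ≤ ((2 : ℝ) ^ h)⁻¹ then |x| ^ (-2 : ℤ) - (2 : ℝ) ^ (2 * h)
  else 0

namespace Stmt18Aux

lemma two_pow_pos (h : ℕ) : (0:ℝ) < 2 ^ h := by positivity

lemma half_lt (h : ℕ) : ((2:ℝ) ^ (h+1))⁻¹ < ((2:ℝ) ^ h)⁻¹ := by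
  apply inv_strictAnti₀ (two_pow_pos h)
  rw [pow_succ]
  nlinarith [two_pow_pos h]

lemma g_eval1 {h : ℕ} {t : ℝ} (h0 : 0 ≤ t) (h1 : t ≤ ((2:ℝ) ^ (h+1))⁻¹) :
    Gam1 h t = (2 : ℝ) ^ (2 * (h + 1)) - (2 : ℝ) ^ (2 * h) := by
  rw [Gam1, abs_of_nonneg h0, if_pos h1]

lemma g_eval2 {h : ℕ} {t : ℝ} (h0 : ((2:ℝ) ^ (h+1))⁻¹ ≤ t) (h1 : t ≤ ((2:ℝ) ^ h)⁻¹) :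
    Gam1 h t = t ^ (-2 : ℤ) - (2 : ℝ) ^ (2 * h) := by
  have ht : 0 ≤ t := le_trans (by positivity) h0
  rw [Gam1, abs_of_nonneg ht]
  by_cases hc : t ≤ ((2:ℝ) ^ (h+1))⁻¹
  · have he : t = ((2:ℝ) ^ (h+1))⁻¹ := le_antisymm hc h0
    rw [if_pos hc, he]
    rw [zpow_neg, zpow_two, ← mul_inv, inv_inv, ← pow_add]
    ring_nf
  · rw [if_neg hc, if_pos h1]

lemma g_eval3 {h : ℕ} {t : ℝ} (h0 : ((2:ℝ) ^ h)⁻¹ ≤ t) : Gam1 h t = 0 := by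
  have ht : 0 ≤ t := le_trans (by positivity) h0
  rw [Gam1, abs_of_nonneg ht]
  by_cases hc : t ≤ ((2:ℝ) ^ h)⁻¹
  · have he : t = ((2:ℝ) ^ h)⁻¹ := le_antisymm hc h0
    rw [if_neg (by rw [he]; exact not_le.2 (half_lt h)), if_pos hc, he]
    rw [zpow_neg, zpow_two, ← mul_inv, inv_inv, ← pow_add]
    ring_nf
  · rw [if_neg (fun hco => hc (le_trans hco (le_of_lt (half_lt h)))), if_neg hc]

lemma g_even (h : ℕ) (t : ℝ) : Gam1 h (-t) = Gam1 h t := by simp [Gam1, abs_neg]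

def fE (h : ℕ) (s : ℝ) : ℝ :=
  if s ≤ ((2:ℝ) ^ (h+1))⁻¹ then (2:ℝ) ^ (h+1) - 3 * (2:ℝ) ^ (2*h) * s
  else s⁻¹ + (2:ℝ) ^ (2*h) * s - (2:ℝ) ^ (h+1)

lemma ii_congr {f g : ℝ → ℝ} {a b : ℝ} (hfg : Set.EqOn f g (Set.uIcc a b))
    (hg : IntervalIntegrable g volume a b) : IntervalIntegrable f volume a b := by
  rw [intervalIntegrable_iff] at *
  exact hg.congr_fun (fun x hx => (hfg (Set.uIoc_subset_uIcc hx)).symm) measurableSet_uIoc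

lemma pow_facts (h : ℕ) :
    (2:ℝ)^(h+1) = 2^h * 2 ∧ (2:ℝ)^(2*h) = (2^h)^2 ∧ (2:ℝ)^(2*(h+1)) = (2^h*2)^2 := by
  refine ⟨pow_succ 2 h, ?_, ?_⟩
  · rw [two_mul, pow_add, sq]
  · rw [two_mul, pow_add, ← pow_succ, sq]

/-- the middle piece `∫_{2^{-(h+1)}}^{2^{-h}} Γ`. -/
lemma midI (h : ℕ) :
    ∫ t in ((2:ℝ)^(h+1))⁻¹..((2:ℝ)^h)⁻¹, Gam1 h t = (2:ℝ)^h / 2 := by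
  obtain ⟨e1, e2, e3⟩ := pow_facts h
  have hp := two_pow_pos h
  have hm : (0:ℝ) < ((2:ℝ)^(h+1))⁻¹ := by positivity
  have hle := (half_lt h).le
  have hicc : Set.uIcc (((2:ℝ)^(h+1))⁻¹) (((2:ℝ)^h)⁻¹) =
      Set.Icc (((2:ℝ)^(h+1))⁻¹) (((2:ℝ)^h)⁻¹) := Set.uIcc_of_le hle
  have h0ni : (0:ℝ) ∉ Set.uIcc (((2:ℝ)^(h+1))⁻¹) (((2:ℝ)^h)⁻¹) := by
    rw [hicc]; intro hx; exact absurd hx.1 (not_le.2 hm)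
  have heq : Set.EqOn (Gam1 h) (fun t => t ^ (-2:ℤ) - (2:ℝ)^(2*h))
      (Set.uIcc (((2:ℝ)^(h+1))⁻¹) (((2:ℝ)^h)⁻¹)) := by
    intro t ht; rw [hicc] at ht; exact g_eval2 ht.1 ht.2
  rw [integral_congr heq]
  rw [intervalIntegral.integral_sub (intervalIntegrable_zpow (Or.inr h0ni))
    intervalIntegrable_const]
  rw [integral_zpow (Or.inr ⟨by norm_num, h0ni⟩), intervalIntegral.integral_const]
  norm_num
  rw [e1, e2]
  field_simp
  ring
lemma int_mid (h : ℕ) :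
    IntervalIntegrable (Gam1 h) volume (((2:ℝ)^(h+1))⁻¹) (((2:ℝ)^h)⁻¹) := by
  have hicc := Set.uIcc_of_le (half_lt h).le
  apply ii_congr (g := fun t => t ^ (-2:ℤ) - (2:ℝ)^(2*h))
  · intro t ht; rw [hicc] at ht; exact g_eval2 ht.1 ht.2
  · exact (intervalIntegrable_zpow (Or.inr (by
      rw [hicc]; intro hx
      exact absurd hx.1 (not_le.2 (by positivity))))).sub intervalIntegrable_const

lemma int_zero_tail (h : ℕ) {a b : ℝ} (ha : ((2:ℝ)^h)⁻¹ ≤ a) (hab : a ≤ b) :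
    IntervalIntegrable (Gam1 h) volume a b := by
  apply ii_congr (g := fun _ => (0:ℝ)) _ intervalIntegrable_const
  intro t ht; rw [Set.uIcc_of_le hab] at ht
  exact g_eval3 (le_trans ha ht.1)

lemma zero_tail (h : ℕ) {a b : ℝ} (ha : ((2:ℝ)^h)⁻¹ ≤ a) (hab : a ≤ b) :
    ∫ t in a..b, Gam1 h t = 0 := by
  rw [integral_congr (g := fun _ => (0:ℝ)) (fun t ht => by
    rw [Set.uIcc_of_le hab] at ht; exact g_eval3 (le_trans ha ht.1))]
  simp

lemma key (h : ℕ) (s : ℝ) (h0 : 0 ≤ s) (h1 : s < ((2:ℝ) ^ h)⁻¹) :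
    ∫ t in s..(s + ((2:ℝ) ^ h)⁻¹), Gam1 h t = fE h s := by
  obtain ⟨e1, e2, e3⟩ := pow_facts h
  have hp := two_pow_pos h
  set m := ((2:ℝ)^(h+1))⁻¹ with hm
  set r := ((2:ℝ)^h)⁻¹ with hr
  have hmr : m ≤ r := (half_lt h).le
  have hm0 : (0:ℝ) < m := by rw [hm]; positivity
  have hrsr : r ≤ s + r := by linarith
  have hmE : m = (2^h*2 : ℝ)⁻¹ := by rw [hm, e1]
  have hrE : r⁻¹ = (2:ℝ)^h := by rw [hr, inv_inv]
  by_cases hc : s ≤ m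
  · -- split s..m..r..(s+r)
    have iA : IntervalIntegrable (Gam1 h) volume s m := by
      apply ii_congr (g := fun _ => (2 : ℝ) ^ (2 * (h + 1)) - (2 : ℝ) ^ (2 * h)) _
        intervalIntegrable_const
      intro t ht; rw [Set.uIcc_of_le hc] at ht
      exact g_eval1 (le_trans h0 ht.1) ht.2
    have iC : IntervalIntegrable (Gam1 h) volume r (s + r) := int_zero_tail h le_rfl hrsr
    have iM : IntervalIntegrable (Gam1 h) volume m (s + r) :=
      (int_mid h).trans iC
    have eA : ∫ t in s..m, Gam1 h t = ((2:ℝ)^(2*(h+1)) - 2^(2*h)) * (m - s) := by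
      rw [integral_congr (g := fun _ => (2 : ℝ) ^ (2 * (h + 1)) - (2 : ℝ) ^ (2 * h))
        (fun t ht => by rw [Set.uIcc_of_le hc] at ht; exact g_eval1 (le_trans h0 ht.1) ht.2)]
      rw [intervalIntegral.integral_const, smul_eq_mul]; ring
    rw [← intervalIntegral.integral_add_adjacent_intervals iA iM,
        ← intervalIntegral.integral_add_adjacent_intervals (int_mid h) iC,
        eA, midI h, zero_tail h le_rfl hrsr, fE, if_pos hc]
    rw [e1, e2, e3, hmE]
    field_simp
    ring
  · -- split s..r..(s+r)
    push_neg at hc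
    have hsr : s ≤ r := h1.le
    have hicc := Set.uIcc_of_le hsr
    have heq : Set.EqOn (Gam1 h) (fun t => t ^ (-2:ℤ) - (2:ℝ)^(2*h)) (Set.uIcc s r) := by
      intro t ht; rw [hicc] at ht; exact g_eval2 (le_trans hc.le ht.1) ht.2
    have h0ni : (0:ℝ) ∉ Set.uIcc s r := by
      rw [hicc]; intro hx; exact absurd hx.1 (not_le.2 (lt_trans hm0 hc))
    have iA : IntervalIntegrable (Gam1 h) volume s r :=
      ii_congr heq ((intervalIntegrable_zpow (Or.inr h0ni)).sub intervalIntegrable_const)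
    rw [← intervalIntegral.integral_add_adjacent_intervals iA (int_zero_tail h le_rfl hrsr),
        zero_tail h le_rfl hrsr, integral_congr heq,
        intervalIntegral.integral_sub (intervalIntegrable_zpow (Or.inr h0ni))
          intervalIntegrable_const,
        integral_zpow (Or.inr ⟨by norm_num, h0ni⟩), intervalIntegral.integral_const,
        fE, if_neg (not_le.2 hc)]
    have hs0 : s ≠ 0 := ne_of_gt (lt_trans hm0 hc)
    norm_num
    rw [e1, e2, hr, inv_inv]
    have e4 : ((2:ℝ)^h)⁻¹ * ((2:ℝ)^h)^2 = 2^h := by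
      rw [sq, ← mul_assoc, inv_mul_cancel₀ (ne_of_gt hp), one_mul]
    linear_combination -e4
lemma fE_eq_high {h : ℕ} {s : ℝ} (hs : ((2:ℝ) ^ (h+1))⁻¹ ≤ s) :
    fE h s = s⁻¹ + (2:ℝ) ^ (2*h) * s - (2:ℝ) ^ (h+1) := by
  obtain ⟨e1, e2, e3⟩ := pow_facts h
  have hp := two_pow_pos h
  by_cases hc : s ≤ ((2:ℝ) ^ (h+1))⁻¹
  · have he : s = ((2:ℝ) ^ (h+1))⁻¹ := le_antisymm hc hs
    rw [fE, if_pos hc, he, inv_inv, e1, e2]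
    field_simp
    ring
  · rw [fE, if_neg hc]

lemma int_fE_low (h : ℕ) {a b : ℝ} (ha : 0 ≤ a ∨ True) (hab : a ≤ b)
    (hb : b ≤ ((2:ℝ) ^ (h+1))⁻¹) :
    IntervalIntegrable (fE h) volume a b := by
  apply ii_congr (g := fun s => (2:ℝ) ^ (h+1) - 3 * (2:ℝ) ^ (2*h) * s)
  · intro t ht; rw [Set.uIcc_of_le hab] at ht
    exact if_pos (le_trans ht.2 hb)
  · exact (Continuous.sub continuous_const (by continuity)).intervalIntegrable a b

lemma int_fE_high (h : ℕ) {a b : ℝ} (ha : ((2:ℝ) ^ (h+1))⁻¹ ≤ a) (hab : a ≤ b) :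
    IntervalIntegrable (fE h) volume a b := by
  have hm0 : (0:ℝ) < ((2:ℝ)^(h+1))⁻¹ := by positivity
  apply ii_congr (g := fun s => s⁻¹ + (2:ℝ) ^ (2*h) * s - (2:ℝ) ^ (h+1))
  · intro t ht; rw [Set.uIcc_of_le hab] at ht
    exact fE_eq_high (le_trans ha ht.1)
  · apply IntervalIntegrable.sub _ intervalIntegrable_const
    apply IntervalIntegrable.add _ ((continuous_const.mul continuous_id').intervalIntegrable a b)
    apply intervalIntegrable_inv (f := fun x : ℝ => x)
    · intro x hx; rw [Set.uIcc_of_le hab] at hx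
      exact ne_of_gt (lt_of_lt_of_le hm0 (le_trans ha hx.1))
    · exact continuousOn_id

lemma int_fE (h : ℕ) : IntervalIntegrable (fE h) volume 0 ((2:ℝ)^h)⁻¹ :=
  (int_fE_low h (Or.inr trivial) (by positivity) le_rfl).trans
    (int_fE_high h le_rfl (half_lt h).le)

lemma fE_total (h : ℕ) : ∫ s in (0:ℝ)..((2:ℝ)^h)⁻¹, fE h s = Real.log 2 := by
  obtain ⟨e1, e2, e3⟩ := pow_facts h
  have hp := two_pow_pos h
  set m := ((2:ℝ)^(h+1))⁻¹ with hm
  set r := ((2:ℝ)^h)⁻¹ with hr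
  have hm0 : (0:ℝ) < m := by rw [hm]; positivity
  have hr0 : (0:ℝ) < r := by rw [hr]; positivity
  have hmr : m ≤ r := (half_lt h).le
  rw [← intervalIntegral.integral_add_adjacent_intervals
    (int_fE_low h (Or.inr trivial) hm0.le le_rfl) (int_fE_high h le_rfl hmr)]
  have e5 : ∫ s in (0:ℝ)..m, fE h s = (2:ℝ)^(h+1) * m - 3 * (2:ℝ)^(2*h) * (m^2/2) := by
    rw [integral_congr (g := fun s => (2:ℝ) ^ (h+1) - 3 * (2:ℝ) ^ (2*h) * s)
      (fun t ht => by rw [Set.uIcc_of_le hm0.le] at ht; exact if_pos ht.2)]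
    rw [intervalIntegral.integral_sub (intervalIntegrable_const)
      ((continuous_mul_left _).intervalIntegrable _ _),
      intervalIntegral.integral_const,
      intervalIntegral.integral_const_mul]
    simp [smul_eq_mul]
    ring
  have hinv : IntervalIntegrable (fun s : ℝ => s⁻¹) volume m r := by
    apply intervalIntegrable_inv (f := fun x : ℝ => x)
    · intro x hx; rw [Set.uIcc_of_le hmr] at hx
      exact ne_of_gt (lt_of_lt_of_le hm0 hx.1)
    · exact continuousOn_id
  have e6 : ∫ s in m..r, fE h s
      = Real.log 2 + (2:ℝ)^(2*h) * ((r^2 - m^2)/2) - (2:ℝ)^(h+1) * (r - m) := by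
    rw [integral_congr (g := fun s => s⁻¹ + (2:ℝ) ^ (2*h) * s - (2:ℝ) ^ (h+1))
      (fun t ht => by rw [Set.uIcc_of_le hmr] at ht; exact fE_eq_high ht.1)]
    rw [intervalIntegral.integral_sub
      (hinv.add ((continuous_mul_left _).intervalIntegrable _ _))
      intervalIntegrable_const,
      intervalIntegral.integral_add hinv
        ((continuous_mul_left _).intervalIntegrable _ _),
      integral_inv_of_pos hm0 hr0, intervalIntegral.integral_const_mul,
      intervalIntegral.integral_const]
    have : r / m = 2 := by
      rw [hr, hm, e1]; field_simp
    rw [this]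
    simp [smul_eq_mul]
    ring
  rw [e5, e6, hm, hr, e1, e2]
  have h2 : ((2:ℝ)^h * 2) ≠ 0 := by positivity
  field_simp
  ring
end Stmt18Aux

open Stmt18Aux in
/-- for a characteristic function `v` with a single jump at `x̄` and the truncated
kernel `Γ_h`, the energy on the interval `I = (x̄ - 2^{-h}, x̄ + 2^{-h})` equals `2 ln 2`. -/
theorem stmt18 (h : ℕ) (xbar : ℝ) :
    let v : ℝ → ℝ := fun x => if x < xbar then 0 else 1
    let I : Set ℝ := Set.Ioo (xbar - ((2 : ℝ) ^ h)⁻¹) (xbar + ((2 : ℝ) ^ h)⁻¹)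
    (∫ x in I, ∫ y in I, Gam1 h (x - y) * (v x - v y) ^ 2) = 2 * Real.log 2 := by
  intro v I
  have hv : ∀ t, v t = if t < xbar then 0 else 1 := fun _ => rfl
  have hI : I = Set.Ioo (xbar - ((2 : ℝ) ^ h)⁻¹) (xbar + ((2 : ℝ) ^ h)⁻¹) := rfl
  set r := ((2:ℝ)^h)⁻¹ with hrdef
  have hr0 : (0:ℝ) < r := by rw [hrdef]; positivity
  set E : ℝ → ℝ := fun x => if x < xbar then fE h (xbar - x) else fE h (x - xbar) with hE
  -- inner integral computation
  have hinner : Set.EqOn (fun x => ∫ y in I, Gam1 h (x - y) * (v x - v y) ^ 2) E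
      (Set.Ioo (xbar - r) (xbar + r)) := by
    intro x hx
    simp only [Set.mem_Ioo] at hx
    by_cases hxc : x < xbar
    · -- left point: integrate over right half
      have hone : ∀ y, Gam1 h (x - y) * (v x - v y)^2
          = (Set.Ici xbar).indicator (fun y => Gam1 h (x - y)) y := by
        intro y
        rw [hv x, hv y, if_pos hxc]
        by_cases hy : y < xbar
        · rw [if_pos hy, Set.indicator_apply, if_neg (fun hmem => not_le.mpr hy (Set.mem_Ici.mp hmem))]; ring
        · rw [if_neg hy, Set.indicator_apply, if_pos (Set.mem_Ici.mpr (not_lt.1 hy))]; ring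
      show (∫ y in I, Gam1 h (x - y) * (v x - v y) ^ 2) = E x
      simp only [hone]
      rw [setIntegral_indicator measurableSet_Ici]
      have hset : I ∩ Set.Ici xbar = Set.Ico xbar (xbar + r) := by
        rw [hI]; ext y
        simp only [Set.mem_inter_iff, Set.mem_Ioo, Set.mem_Ici, Set.mem_Ico]
        constructor
        · rintro ⟨⟨_, h2⟩, h3⟩; exact ⟨h3, h2⟩
        · rintro ⟨h1, h2⟩; exact ⟨⟨by linarith, h2⟩, h1⟩
      rw [hset, integral_Ico_eq_integral_Ioo, ← integral_Ioc_eq_integral_Ioo,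
        ← intervalIntegral.integral_of_le (by linarith : xbar ≤ xbar + r)]
      have hev : Set.EqOn (fun y => Gam1 h (x - y)) (fun y => Gam1 h (y - x))
          (Set.uIcc xbar (xbar + r)) := fun y _ => by
        show Gam1 h (x - y) = Gam1 h (y - x)
        rw [← neg_sub y x, g_even]
      rw [intervalIntegral.integral_congr hev,
        intervalIntegral.integral_comp_sub_right (Gam1 h) x,
        show xbar + r - x = (xbar - x) + r from by ring,
        key h (xbar - x) (by linarith) (by rw [← hrdef]; linarith)]
      rw [hE]; simp only [if_pos hxc]
    · have hone : ∀ y, Gam1 h (x - y) * (v x - v y)^2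
          = (Set.Iio xbar).indicator (fun y => Gam1 h (x - y)) y := by
        intro y
        rw [hv x, hv y, if_neg hxc]
        by_cases hy : y < xbar
        · rw [if_pos hy, Set.indicator_apply, if_pos (Set.mem_Iio.mpr hy)]; ring
        · rw [if_neg hy, Set.indicator_apply, if_neg (fun hmem => hy (Set.mem_Iio.mp hmem))]; ring
      show (∫ y in I, Gam1 h (x - y) * (v x - v y) ^ 2) = E x
      simp only [hone]
      rw [setIntegral_indicator measurableSet_Iio]
      have hset : I ∩ Set.Iio xbar = Set.Ioo (xbar - r) xbar := by
        rw [hI]; ext y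
        simp only [Set.mem_inter_iff, Set.mem_Ioo, Set.mem_Iio]
        constructor
        · rintro ⟨⟨h1, _⟩, h3⟩; exact ⟨h1, h3⟩
        · rintro ⟨h1, h2⟩; exact ⟨⟨h1, by linarith⟩, h2⟩
      rw [hset, ← integral_Ioc_eq_integral_Ioo,
        ← intervalIntegral.integral_of_le (by linarith : xbar - r ≤ xbar),
        intervalIntegral.integral_comp_sub_left (Gam1 h) x,
        show x - (xbar - r) = (x - xbar) + r from by ring,
        key h (x - xbar) (by linarith [not_lt.1 hxc]) (by rw [← hrdef]; linarith)]
      rw [hE]; simp only [if_neg hxc]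
  rw [hI, setIntegral_congr_fun measurableSet_Ioo hinner]
  -- integrability of E on both halves
  have iR : IntervalIntegrable E volume xbar (xbar + r) := by
    apply ii_congr (g := fun x => fE h (x - xbar))
    · intro x hxx
      rw [Set.uIcc_of_le (by linarith : xbar ≤ xbar + r)] at hxx
      rw [hE]; simp only [if_neg (not_lt.2 hxx.1)]
    · have := (int_fE h).comp_sub_right xbar
      rw [zero_add, add_comm] at this
      exact this
  have iL : IntervalIntegrable E volume (xbar - r) xbar := by
    apply ii_congr (g := fun x => fE h (xbar - x))
    · intro x hxx
      rw [Set.uIcc_of_le (by linarith : xbar - r ≤ xbar)] at hxx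
      rw [hE]
      by_cases hxc : x < xbar
      · simp only [if_pos hxc]
      · have hxe : x = xbar := le_antisymm hxx.2 (not_lt.1 hxc)
        rw [hxe]; simp
    · have := (int_fE h).comp_sub_left xbar
      rw [sub_zero, show xbar - r = xbar - r from rfl] at this
      exact this.symm
  rw [← integral_Ioc_eq_integral_Ioo,
    ← intervalIntegral.integral_of_le (by linarith : xbar - r ≤ xbar + r),
    ← intervalIntegral.integral_add_adjacent_intervals iL iR]
  have eL : ∫ x in (xbar - r)..xbar, E x = ∫ s in (0:ℝ)..r, fE h s := by
    rw [intervalIntegral.integral_congr (g := fun x => fE h (xbar - x))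
      (fun x hxx => by
        rw [Set.uIcc_of_le (by linarith : xbar - r ≤ xbar)] at hxx
        rw [hE]
        by_cases hxc : x < xbar
        · simp only [if_pos hxc]
        · have hxe : x = xbar := le_antisymm hxx.2 (not_lt.1 hxc)
          rw [hxe]; simp)]
    rw [intervalIntegral.integral_comp_sub_left (fE h) xbar, sub_self,
      show xbar - (xbar - r) = r from by ring]
  have eR : ∫ x in xbar..(xbar + r), E x = ∫ s in (0:ℝ)..r, fE h s := by
    rw [intervalIntegral.integral_congr (g := fun x => fE h (x - xbar))
      (fun x hxx => by
        rw [Set.uIcc_of_le (by linarith : xbar ≤ xbar + r)] at hxx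
        rw [hE]; simp only [if_neg (not_lt.2 hxx.1)])]
    rw [intervalIntegral.integral_comp_sub_right (fE h) xbar, sub_self,
      show xbar + r - xbar = r from by ring]
  rw [eL, eR, hrdef, fE_total h]
  ring
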